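/- arXiv:2601.17392 — 2 statements merged into one kernel-verified Lean document; each statement's English description precedes it below -/
import Mathlib

section
/- Let n ≥ 0, let P₀ ∈ ℝ^{d×d} be positive semidefinite, let e₀, …, e_n be symmetric d×d matrices, and define p₀ := P₀ + e₀ and p_k := Φ(p_{k−1}) + e_k for 1 ≤ k ≤ n; assume each p_k is positive semidefinite. Then p_n = Φ_n(P₀) + Σ_{k=0}^{n} 𝓔_{n−k}(p_k) e_k 𝓔_{n−k}(Φ(p_{k−1}))ᵀ, with the convention Φ(p_{−1}) := P₀ for the term k = 0. -/
open Matrix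

noncomputable section

/-- The Riccati map `Φ(P) := A (I + P S)⁻¹ P Aᵀ + R`. -/
def Ricc {d : ℕ} (A S R P : Matrix (Fin d) (Fin d) ℝ) : Matrix (Fin d) (Fin d) ℝ :=
  A * (1 + P * S)⁻¹ * P * Aᵀ + R

/-- The map `𝓔(P) := A (I + P S)⁻¹`. -/
def Emat {d : ℕ} (A S P : Matrix (Fin d) (Fin d) ℝ) : Matrix (Fin d) (Fin d) ℝ :=
  A * (1 + P * S)⁻¹

/-- The directed products `𝓔₀(P) := I`, `𝓔_{n+1}(P) := 𝓔_n(Φ(P)) 𝓔(P)`. -/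
def Edir {d : ℕ} (A S R : Matrix (Fin d) (Fin d) ℝ) :
    ℕ → Matrix (Fin d) (Fin d) ℝ → Matrix (Fin d) (Fin d) ℝ
  | 0, _ => 1
  | n + 1, P => Edir A S R n (Ricc A S R P) * Emat A S P

/-!
For positive semidefinite `P`, `Q` the matrices `1 + P S`, `1 + Q S` are invertible and
`(1 + P S)⁻¹ P - (1 + Q S)⁻¹ Q = (1 + P S)⁻¹ (P - Q) (1 + S Q)⁻¹`, so
`Φ(P) - Φ(Q) = 𝓔(P) (P - Q) 𝓔(Q)ᵀ`. As `Φ` preserves positive semidefiniteness, this iterates to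
`Φₘ(P) - Φₘ(Q) = 𝓔ₘ(P) (P - Q) 𝓔ₘ(Q)ᵀ`. Since `p_k - Φ(p_{k-1}) = e_k`, the `k`-th summand is
`Φ_{n-k}(p_k) - Φ_{n-k+1}(p_{k-1})`, and the sum telescopes to `pₙ - Φₙ(P₀)`.
-/

namespace Matrix

section CommRing

variable {n α : Type*} [Fintype n] [DecidableEq n] [CommRing α] {P Q S : Matrix n n α}

lemma inv_one_add_mul_mul_eq_mul_inv_one_add_mul (hQ : IsUnit (1 + Q * S).det) :
    (1 + Q * S)⁻¹ * Q = Q * (1 + S * Q)⁻¹ := by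
  have hQ' : IsUnit (1 + S * Q).det := by rwa [det_one_add_mul_comm]
  have hcomm : (1 + Q * S) * Q = Q * (1 + S * Q) := by noncomm_ring
  calc (1 + Q * S)⁻¹ * Q = (1 + Q * S)⁻¹ * (Q * (1 + S * Q)) * (1 + S * Q)⁻¹ := by
        rw [← Matrix.mul_assoc, mul_nonsing_inv_cancel_right _ _ hQ']
    _ = (1 + Q * S)⁻¹ * ((1 + Q * S) * Q) * (1 + S * Q)⁻¹ := by rw [hcomm]
    _ = Q * (1 + S * Q)⁻¹ := by rw [nonsing_inv_mul_cancel_left _ _ hQ]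

lemma inv_one_add_mul_mul_sub (hP : IsUnit (1 + P * S).det) (hQ : IsUnit (1 + Q * S).det) :
    (1 + P * S)⁻¹ * P - (1 + Q * S)⁻¹ * Q = (1 + P * S)⁻¹ * (P - Q) * (1 + S * Q)⁻¹ := by
  have hQ' : IsUnit (1 + S * Q).det := by rwa [det_one_add_mul_comm]
  have hsplit : P - Q = P * (1 + S * Q) - (1 + P * S) * Q := by noncomm_ring
  rw [inv_one_add_mul_mul_eq_mul_inv_one_add_mul hQ, hsplit, Matrix.mul_sub, Matrix.sub_mul,
    ← Matrix.mul_assoc, mul_nonsing_inv_cancel_right _ _ hQ', ← Matrix.mul_assoc,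
    nonsing_inv_mul _ hP, Matrix.one_mul]

end CommRing

section RCLike

open scoped ComplexOrder

variable {n 𝕜 : Type*} [Fintype n] [DecidableEq n] [RCLike 𝕜] {P S : Matrix n n 𝕜}

lemma PosSemidef.isUnit_det_one_add_mul (hP : P.PosSemidef) (hS : S.PosSemidef) :
    IsUnit (1 + P * S).det := by
  obtain ⟨C, rfl⟩ : ∃ C : Matrix n n 𝕜, S = Cᴴ * C := by
    open scoped MatrixOrder in
    exact CStarAlgebra.nonneg_iff_eq_star_mul_self.mp hS.nonneg
  have hpos : (1 + C * P * Cᴴ).PosDef := PosDef.one.add_posSemidef (hP.mul_mul_conjTranspose_same C)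
  rw [← Matrix.mul_assoc, det_one_add_mul_comm, ← Matrix.mul_assoc]
  exact hpos.det_pos.ne'.isUnit

lemma PosSemidef.inv_one_add_mul_mul (hP : P.PosSemidef) (hS : S.PosSemidef) :
    ((1 + P * S)⁻¹ * P).PosSemidef := by
  have hSP : IsUnit (1 + S * P).det := by
    rw [det_one_add_mul_comm]; exact hP.isUnit_det_one_add_mul hS
  have hadj : ((1 + P * S)⁻¹)ᴴ = (1 + S * P)⁻¹ := by
    rw [conjTranspose_nonsing_inv, conjTranspose_add, conjTranspose_one, conjTranspose_mul,
      hP.isHermitian.eq, hS.isHermitian.eq]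
  have hfactor : (1 + P * S)⁻¹ * P = (1 + P * S)⁻¹ * (P + Pᴴ * S * P) * ((1 + P * S)⁻¹)ᴴ := by
    rw [hadj, hP.isHermitian.eq, show P + P * S * P = P * (1 + S * P) by noncomm_ring,
      ← Matrix.mul_assoc, mul_nonsing_inv_cancel_right _ _ hSP]
  rw [hfactor]
  exact (hP.add (hS.conjTranspose_mul_mul_same P)).mul_mul_conjTranspose_same _

end RCLike

end Matrix

section Riccati

variable {d : ℕ} {A S R P Q : Matrix (Fin d) (Fin d) ℝ}

lemma Emat_transpose (hS : S.PosSemidef) (hQ : Q.PosSemidef) :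
    (Emat A S Q)ᵀ = (1 + S * Q)⁻¹ * Aᵀ := by
  rw [Emat, transpose_mul, transpose_nonsing_inv, transpose_add, transpose_one, transpose_mul,
    (isHermitian_iff_isSymm.mp hS.isHermitian).eq, (isHermitian_iff_isSymm.mp hQ.isHermitian).eq]

lemma Ricc_sub_Ricc (hS : S.PosSemidef) (hP : P.PosSemidef) (hQ : Q.PosSemidef) :
    Ricc A S R P - Ricc A S R Q = Emat A S P * (P - Q) * (Emat A S Q)ᵀ := by
  rw [Emat_transpose hS hQ, Emat, Ricc, Ricc, add_sub_add_right_eq_sub]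
  calc _ = A * ((1 + P * S)⁻¹ * P - (1 + Q * S)⁻¹ * Q) * Aᵀ := by noncomm_ring
    _ = _ := by
      rw [inv_one_add_mul_mul_sub (hP.isUnit_det_one_add_mul hS) (hQ.isUnit_det_one_add_mul hS)]
      noncomm_ring

lemma posSemidef_Ricc (hS : S.PosSemidef) (hR : R.PosSemidef) (hP : P.PosSemidef) :
    (Ricc A S R P).PosSemidef := by
  have h := (hP.inv_one_add_mul_mul hS).mul_mul_conjTranspose_same A
  rw [conjTranspose_eq_transpose_of_trivial, ← Matrix.mul_assoc] at h
  exact h.add hR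

lemma iterate_Ricc_sub_iterate_Ricc (hS : S.PosSemidef) (hR : R.PosSemidef) (m : ℕ)
    (hP : P.PosSemidef) (hQ : Q.PosSemidef) :
    (Ricc A S R)^[m] P - (Ricc A S R)^[m] Q = Edir A S R m P * (P - Q) * (Edir A S R m Q)ᵀ := by
  induction m generalizing P Q with
  | zero => simp [Edir]
  | succ m ih =>
    rw [Function.iterate_succ_apply, Function.iterate_succ_apply,
      ih (posSemidef_Ricc hS hR hP) (posSemidef_Ricc hS hR hQ), Ricc_sub_Ricc hS hP hQ, Edir,
      Edir, transpose_mul]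
    simp only [Matrix.mul_assoc]

lemma iterate_Ricc_eq_add_sum (hS : S.PosSemidef) (hR : R.PosSemidef) {n : ℕ}
    {p q e : ℕ → Matrix (Fin d) (Fin d) ℝ} (hq₀ : (q 0).PosSemidef)
    (hpq : ∀ k ≤ n, p k = q k + e k) (hqp : ∀ k < n, q (k + 1) = Ricc A S R (p k))
    (hp : ∀ k ≤ n, (p k).PosSemidef) {k : ℕ} (hk : k ≤ n) :
    (Ricc A S R)^[n - k] (p k) = (Ricc A S R)^[n] (q 0) +
      ∑ j ∈ Finset.range (k + 1), Edir A S R (n - j) (p j) * e j * (Edir A S R (n - j) (q j))ᵀ := by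
  have hq : ∀ j ≤ n, (q j).PosSemidef := by
    rintro (_ | j) hj
    · exact hq₀
    · rw [hqp j hj]; exact posSemidef_Ricc hS hR (hp j (by omega))
  have hstep : ∀ j ≤ n, (Ricc A S R)^[n - j] (p j) = (Ricc A S R)^[n - j] (q j) +
      Edir A S R (n - j) (p j) * e j * (Edir A S R (n - j) (q j))ᵀ := fun j hj => by
    rw [← sub_eq_iff_eq_add', iterate_Ricc_sub_iterate_Ricc hS hR _ (hp j hj) (hq j hj), hpq j hj,
      add_sub_cancel_left]
  induction k with
  | zero => simpa using hstep 0 hk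
  | succ k ih =>
    have hshift : (Ricc A S R)^[n - (k + 1)] (q (k + 1)) = (Ricc A S R)^[n - k] (p k) := by
      rw [hqp k hk, ← Function.iterate_succ_apply, show (n - (k + 1)).succ = n - k by omega]
    rw [hstep _ hk, hshift, ih (by omega), Finset.sum_range_succ _ (k + 1), add_assoc]

end Riccati

theorem statement10_general {d d₀ : ℕ}
    (A : Matrix (Fin d) (Fin d) ℝ) (B : Matrix (Fin d₀) (Fin d) ℝ)
    (R : Matrix (Fin d) (Fin d) ℝ) (R₀ : Matrix (Fin d₀) (Fin d₀) ℝ)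
    (hR : R.PosDef) (hR₀ : R₀.PosDef)
    (S : Matrix (Fin d) (Fin d) ℝ) (hSdef : S = Bᵀ * R₀⁻¹ * B)
    (n : ℕ) (P₀ : Matrix (Fin d) (Fin d) ℝ) (hP₀ : P₀.PosSemidef)
    (e p : ℕ → Matrix (Fin d) (Fin d) ℝ)
    (hp0 : p 0 = P₀ + e 0)
    (hpk : ∀ k, 1 ≤ k → k ≤ n → p k = Ricc A S R (p (k - 1)) + e k)
    (hpsd : ∀ k, k ≤ n → (p k).PosSemidef) :
    p n = (Ricc A S R)^[n] P₀ +
      ∑ k ∈ Finset.range (n + 1),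
        Edir A S R (n - k) (p k) * e k *
          (Edir A S R (n - k) (if k = 0 then P₀ else Ricc A S R (p (k - 1))))ᵀ := by
  have hS : S.PosSemidef := by
    rw [hSdef, ← conjTranspose_eq_transpose_of_trivial]
    exact hR₀.posSemidef.inv.conjTranspose_mul_mul_same B
  have hpq : ∀ k ≤ n, p k = (if k = 0 then P₀ else Ricc A S R (p (k - 1))) + e k := by
    rintro (_ | k) hk
    · exact hp0
    · exact hpk _ (by omega) hk
  simpa using iterate_Ricc_eq_add_sum hS hR.posSemidef (by simpa using hP₀) hpq
    (fun k _ => by simp) hpsd le_rfl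

/-- interpolating formula.  Let `P₀` be positive semidefinite, let
`e₀, …, e_n` be symmetric matrices and define `p₀ := P₀ + e₀`,
`p_k := Φ(p_{k−1}) + e_k` for `1 ≤ k ≤ n`; assume each `p_k` is positive semidefinite.
Then `p_n = Φ_n(P₀) + Σ_{k=0}^{n} 𝓔_{n−k}(p_k) e_k 𝓔_{n−k}(Φ(p_{k−1}))ᵀ`, with the
convention `Φ(p_{−1}) := P₀` for the term `k = 0`. -/
theorem statement10 {d d₀ : ℕ} (hd : 1 ≤ d) (hd₀ : 1 ≤ d₀)
    (A : Matrix (Fin d) (Fin d) ℝ) (B : Matrix (Fin d₀) (Fin d) ℝ)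
    (R : Matrix (Fin d) (Fin d) ℝ) (R₀ : Matrix (Fin d₀) (Fin d₀) ℝ)
    (hR : R.PosDef) (hR₀ : R₀.PosDef)
    (S : Matrix (Fin d) (Fin d) ℝ) (hSdef : S = Bᵀ * R₀⁻¹ * B)
    (n : ℕ) (P₀ : Matrix (Fin d) (Fin d) ℝ) (hP₀ : P₀.PosSemidef)
    (e p : ℕ → Matrix (Fin d) (Fin d) ℝ)
    (he : ∀ k, k ≤ n → (e k)ᵀ = e k)
    (hp0 : p 0 = P₀ + e 0)
    (hpk : ∀ k, 1 ≤ k → k ≤ n → p k = Ricc A S R (p (k - 1)) + e k)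
    (hpsd : ∀ k, k ≤ n → (p k).PosSemidef) :
    p n = (Ricc A S R)^[n] P₀ +
      ∑ k ∈ Finset.range (n + 1),
        Edir A S R (n - k) (p k) * e k *
          (Edir A S R (n - k) (if k = 0 then P₀ else Ricc A S R (p (k - 1))))ᵀ :=
  statement10_general A B R R₀ hR hR₀ S hSdef n P₀ hP₀ e p hp0 hpk hpsd
end
end

section
/- Assume S and B Bᵀ are positive definite. Then for all positive semidefinite p, P ∈ ℝ^{d×d}: (K(p) − K(P)) B = (I + P S)⁻¹ (p − P) S (I + p S)⁻¹, and ‖K(p) − K(P)‖_F ≤ λ_min(B Bᵀ)^{−1/2} · λ_max(S) · Tr(S) · ‖S⁻¹‖_F · ‖p − P‖_F. -/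
open Matrix

noncomputable section

/-- The largest eigenvalue of a symmetric matrix, via the Rayleigh
variational characterization. -/
def lamMax {d : ℕ} (M : Matrix (Fin d) (Fin d) ℝ) : ℝ :=
  sSup {r | ∃ x : Fin d → ℝ, x ⬝ᵥ x = 1 ∧ r = x ⬝ᵥ M.mulVec x}

/-- The smallest eigenvalue of a symmetric matrix, via the Rayleigh
variational characterization. -/
def lamMin {d : ℕ} (M : Matrix (Fin d) (Fin d) ℝ) : ℝ :=
  sInf {r | ∃ x : Fin d → ℝ, x ⬝ᵥ x = 1 ∧ r = x ⬝ᵥ M.mulVec x}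

/-- The Frobenius norm `‖M‖_F := √Tr(M Mᵀ)`. -/
def frobNorm {m n : ℕ} (M : Matrix (Fin m) (Fin n) ℝ) : ℝ :=
  Real.sqrt (Matrix.trace (M * Mᵀ))

/-!
With `U Q := 1 + Q S`, the gain satisfies `K(Q) B = 1 - (U Q)⁻¹`, so the identity is the resolvent
identity `a⁻¹ - b⁻¹ = a⁻¹ (b - a) b⁻¹`. Since `(U Q)⁻¹ = S⁻¹ (S⁻¹ + Q)⁻¹`, it can be rewritten as
`(K p - K P) B = S⁻¹ N_P (p - P) N_p` with `N_Q := (S⁻¹ + Q)⁻¹`, and `0 ≤ N_Q ≤ S ≤ λ_max(S) • 1`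
in the Loewner order because inversion is antitone. Multiplying by a matrix `0 ≤ N ≤ c • 1`
scales the Frobenius norm by at most `c`, while `λ_min(B Bᵀ) • 1 ≤ B Bᵀ` gives
`√λ_min(B Bᵀ) ‖D‖_F ≤ ‖D B‖_F`; together with submultiplicativity and `λ_max(S) ≤ Tr S` this
yields the bound.
-/

open scoped MatrixOrder

namespace Matrix

lemma transpose_eq_self_of_nonneg {n : Type*} {N : Matrix n n ℝ} (hN : 0 ≤ N) : Nᵀ = N := by
  simpa [conjTranspose_eq_transpose_of_trivial] using (nonneg_iff_posSemidef.mp hN).isHermitian.eq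

lemma trace_mul_mul_transpose_mono {m n : Type*} [Fintype m] [Fintype n] (X : Matrix m n ℝ)
    {N₁ N₂ : Matrix n n ℝ} (h : N₁ ≤ N₂) : trace (X * N₁ * Xᵀ) ≤ trace (X * N₂ * Xᵀ) := by
  have := (le_iff.mp h).mul_mul_conjTranspose_same X |>.trace_nonneg
  rw [Matrix.mul_sub, Matrix.sub_mul, trace_sub, conjTranspose_eq_transpose_of_trivial] at this
  linarith

variable {n : Type*} [Fintype n] [DecidableEq n]

lemma PosDef.inv_anti {A B : Matrix n n ℝ} (hA : A.PosDef) (hAB : A ≤ B) : B⁻¹ ≤ A⁻¹ := by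
  have hX : 0 ≤ B - A := sub_nonneg.mpr hAB
  have hB : B.PosDef := by simpa using hA.add_posSemidef (le_iff.mp hAB)
  have hAu := (isUnit_iff_isUnit_det A).mp hA.isUnit
  have hBu := (isUnit_iff_isUnit_det B).mp hB.isUnit
  have hBinv : IsSelfAdjoint B⁻¹ := hB.inv.isHermitian
  have hsplit : A⁻¹ - B⁻¹ = B⁻¹ * (B - A) * B⁻¹ + B⁻¹ * ((B - A) * A⁻¹ * (B - A)) * B⁻¹ := by
    simp only [Matrix.mul_sub, Matrix.sub_mul, ← Matrix.mul_assoc, nonsing_inv_mul _ hAu,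
      nonsing_inv_mul _ hBu, mul_nonsing_inv_cancel_right _ _ hAu,
      mul_nonsing_inv_cancel_right _ _ hBu, Matrix.one_mul]
    abel
  rw [← sub_nonneg, hsplit]
  exact add_nonneg (hBinv.conjugate_nonneg hX)
    (hBinv.conjugate_nonneg ((IsSelfAdjoint.of_nonneg hX).conjugate_nonneg
      (nonneg_iff_posSemidef.mpr hA.inv.posSemidef)))

lemma PosDef.inv_inv_add_le {S Q : Matrix n n ℝ} (hS : S.PosDef) (hQ : Q.PosSemidef) :
    (S⁻¹ + Q)⁻¹ ≤ S := by
  simpa [nonsing_inv_nonsing_inv _ ((isUnit_iff_isUnit_det S).mp hS.isUnit)] using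
    hS.inv.inv_anti (le_add_of_nonneg_right (nonneg_iff_posSemidef.mpr hQ))

lemma mul_self_le_sq_smul_one {N : Matrix n n ℝ} {c : ℝ} (hN : 0 ≤ N) (hNc : N ≤ c • 1) :
    N * N ≤ c ^ 2 • 1 := by
  set U := CFC.sqrt (c • 1 - N)
  have hUU : U * U = c • 1 - N := CFC.sqrt_mul_sqrt_self _ (sub_nonneg.mpr hNc)
  have hU : IsSelfAdjoint U := IsSelfAdjoint.of_nonneg (CFC.sqrt_nonneg _)
  have hN' : N = c • 1 - U * U := by rw [hUU]; abel
  have hfactor : c ^ 2 • 1 - N * N = U * (c • 1 + N) * U := by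
    rw [hN']
    simp only [Matrix.mul_sub, Matrix.sub_mul, Matrix.mul_add, Matrix.add_mul, Matrix.smul_mul,
      Matrix.mul_smul, Matrix.mul_one, Matrix.one_mul, Matrix.mul_assoc]
    module
  rw [← sub_nonneg, hfactor]
  exact hU.conjugate_nonneg (add_nonneg (hN.trans hNc) hN)

end Matrix

section Frobenius

variable {l m n : ℕ}

lemma frobNorm_nonneg (M : Matrix (Fin m) (Fin n) ℝ) : 0 ≤ frobNorm M :=
  Real.sqrt_nonneg _

lemma frobNorm_sq (M : Matrix (Fin m) (Fin n) ℝ) : frobNorm M ^ 2 = trace (M * Mᵀ) :=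
  Real.sq_sqrt (by simpa using (posSemidef_self_mul_conjTranspose M).trace_nonneg)

lemma frobNorm_transpose (M : Matrix (Fin m) (Fin n) ℝ) : frobNorm Mᵀ = frobNorm M := by
  rw [frobNorm, frobNorm, transpose_transpose, trace_mul_comm]

attribute [local instance] Matrix.frobeniusNormedAddCommGroup in
lemma frobNorm_eq_norm (M : Matrix (Fin m) (Fin n) ℝ) : frobNorm M = ‖M‖ := by
  rw [frobenius_norm_def, ← Real.sqrt_eq_rpow, frobNorm]
  simp [trace, mul_apply, sq]

attribute [local instance] Matrix.frobeniusNormedAddCommGroup in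
lemma frobNorm_mul_le (A : Matrix (Fin l) (Fin m) ℝ) (B : Matrix (Fin m) (Fin n) ℝ) :
    frobNorm (A * B) ≤ frobNorm A * frobNorm B := by
  simpa only [frobNorm_eq_norm] using frobenius_norm_mul A B

lemma frobNorm_mul_sq (X : Matrix (Fin l) (Fin m) ℝ) (M : Matrix (Fin m) (Fin n) ℝ) :
    frobNorm (X * M) ^ 2 = trace (X * (M * Mᵀ) * Xᵀ) := by
  rw [frobNorm_sq, transpose_mul, Matrix.mul_assoc, Matrix.mul_assoc, Matrix.mul_assoc]

lemma trace_mul_smul_one_mul_transpose (X : Matrix (Fin l) (Fin m) ℝ) (c : ℝ) :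
    trace (X * (c • (1 : Matrix (Fin m) (Fin m) ℝ)) * Xᵀ) = c * frobNorm X ^ 2 := by
  rw [frobNorm_sq, Matrix.mul_smul, Matrix.mul_one, Matrix.smul_mul, trace_smul, smul_eq_mul]

lemma frobNorm_mul_le_of_mul_transpose_le (X : Matrix (Fin l) (Fin m) ℝ)
    {M : Matrix (Fin m) (Fin n) ℝ} {c : ℝ} (hc : 0 ≤ c) (h : M * Mᵀ ≤ c ^ 2 • 1) :
    frobNorm (X * M) ≤ c * frobNorm X := by
  refine (pow_le_pow_iff_left₀ (frobNorm_nonneg _) (by positivity [frobNorm_nonneg X])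
    two_ne_zero).mp ?_
  calc frobNorm (X * M) ^ 2 = trace (X * (M * Mᵀ) * Xᵀ) := frobNorm_mul_sq X M
    _ ≤ trace (X * (c ^ 2 • 1) * Xᵀ) := trace_mul_mul_transpose_mono X h
    _ = (c * frobNorm X) ^ 2 := by rw [trace_mul_smul_one_mul_transpose, mul_pow]

lemma frobNorm_le_of_smul_one_le_mul_transpose (X : Matrix (Fin l) (Fin m) ℝ)
    {M : Matrix (Fin m) (Fin n) ℝ} {t : ℝ} (ht : 0 < t) (h : t • 1 ≤ M * Mᵀ) :
    frobNorm X ≤ (Real.sqrt t)⁻¹ * frobNorm (X * M) := by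
  rw [le_inv_mul_iff₀ (Real.sqrt_pos.mpr ht)]
  refine (pow_le_pow_iff_left₀ (by positivity [frobNorm_nonneg X]) (frobNorm_nonneg _)
    two_ne_zero).mp ?_
  calc (Real.sqrt t * frobNorm X) ^ 2 = trace (X * (t • 1) * Xᵀ) := by
        rw [trace_mul_smul_one_mul_transpose, mul_pow, Real.sq_sqrt ht.le]
    _ ≤ trace (X * (M * Mᵀ) * Xᵀ) := trace_mul_mul_transpose_mono X h
    _ = frobNorm (X * M) ^ 2 := (frobNorm_mul_sq X M).symm

lemma frobNorm_mul_le_of_le_smul_one (X : Matrix (Fin m) (Fin n) ℝ)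
    {N : Matrix (Fin n) (Fin n) ℝ} {c : ℝ} (hc : 0 ≤ c) (hN : 0 ≤ N) (hNc : N ≤ c • 1) :
    frobNorm (X * N) ≤ c * frobNorm X := by
  refine frobNorm_mul_le_of_mul_transpose_le X hc ?_
  rw [transpose_eq_self_of_nonneg hN]
  exact mul_self_le_sq_smul_one hN hNc

lemma frobNorm_mul_le_of_le_smul_one' (X : Matrix (Fin n) (Fin m) ℝ)
    {N : Matrix (Fin n) (Fin n) ℝ} {c : ℝ} (hc : 0 ≤ c) (hN : 0 ≤ N) (hNc : N ≤ c • 1) :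
    frobNorm (N * X) ≤ c * frobNorm X := by
  rw [← frobNorm_transpose, transpose_mul, transpose_eq_self_of_nonneg hN, ← frobNorm_transpose X]
  exact frobNorm_mul_le_of_le_smul_one _ hc hN hNc

end Frobenius

section Rayleigh

variable {n : ℕ} {M : Matrix (Fin n) (Fin n) ℝ}

-- `lamMax M` and `lamMin M` are `sSup` and `sInf` of this set by `rfl`.
def numericalRange (M : Matrix (Fin n) (Fin n) ℝ) : Set ℝ :=
  {r | ∃ x : Fin n → ℝ, x ⬝ᵥ x = 1 ∧ r = x ⬝ᵥ M.mulVec x}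

lemma isCompact_setOf_dotProduct_self_eq_one (n : ℕ) : IsCompact {x : Fin n → ℝ | x ⬝ᵥ x = 1} := by
  refine Metric.isCompact_of_isClosed_isBounded
    (isClosed_eq (continuous_id.dotProduct continuous_id) continuous_const)
    ((Metric.isBounded_closedBall (x := 0) (r := 1)).subset fun x (hx : x ⬝ᵥ x = 1) => ?_)
  rw [mem_closedBall_zero_iff, pi_norm_le_iff_of_nonneg zero_le_one]
  intro i
  have : x i ^ 2 ≤ x ⬝ᵥ x := by
    simpa [sq, dotProduct] using Finset.single_le_sum (f := fun j => x j * x j)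
      (fun j _ => mul_self_nonneg (x j)) (Finset.mem_univ i)
  rw [Real.norm_eq_abs, ← sq_le_one_iff_abs_le_one]
  linarith

lemma isCompact_numericalRange (M : Matrix (Fin n) (Fin n) ℝ) : IsCompact (numericalRange M) := by
  have : numericalRange M = (fun x => x ⬝ᵥ M *ᵥ x) '' {x | x ⬝ᵥ x = 1} := by
    ext r; simp [numericalRange, eq_comm]
  rw [this]
  exact (isCompact_setOf_dotProduct_self_eq_one n).image
    (continuous_id.dotProduct (continuous_const.matrix_mulVec continuous_id))

lemma rayleigh_le_lamMax (M : Matrix (Fin n) (Fin n) ℝ) {x : Fin n → ℝ} (hx : x ⬝ᵥ x = 1) :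
    x ⬝ᵥ M *ᵥ x ≤ lamMax M :=
  le_csSup (isCompact_numericalRange M).bddAbove ⟨x, hx, rfl⟩

lemma lamMin_le_rayleigh (M : Matrix (Fin n) (Fin n) ℝ) {x : Fin n → ℝ} (hx : x ⬝ᵥ x = 1) :
    lamMin M ≤ x ⬝ᵥ M *ᵥ x :=
  csInf_le (isCompact_numericalRange M).bddBelow ⟨x, hx, rfl⟩

lemma rayleigh_le_of_forall_unit {c : ℝ} (h : ∀ x : Fin n → ℝ, x ⬝ᵥ x = 1 → x ⬝ᵥ M *ᵥ x ≤ c)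
    (y : Fin n → ℝ) : y ⬝ᵥ M *ᵥ y ≤ c * (y ⬝ᵥ y) := by
  rcases eq_or_ne y 0 with rfl | hy
  · simp
  have hpos : 0 < y ⬝ᵥ y := by
    simpa [dotProduct_self_star_pos_iff] using (dotProduct_star_self_pos_iff (v := y)).mpr hy
  set r := Real.sqrt (y ⬝ᵥ y)
  have hr : 0 < r := Real.sqrt_pos.mpr hpos
  have hrr : r * r = y ⬝ᵥ y := Real.mul_self_sqrt hpos.le
  have hunit := h (r⁻¹ • y) (by
    rw [smul_dotProduct, dotProduct_smul, smul_eq_mul, smul_eq_mul, ← mul_assoc, ← hrr]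
    field_simp)
  rw [smul_dotProduct, mulVec_smul, dotProduct_smul, smul_eq_mul, smul_eq_mul, ← mul_assoc,
    ← mul_inv, hrr, inv_mul_le_iff₀ hpos] at hunit
  linarith

lemma le_smul_one_of_forall_rayleigh_le (hM : M.IsHermitian) {c : ℝ}
    (h : ∀ x : Fin n → ℝ, x ⬝ᵥ x = 1 → x ⬝ᵥ M *ᵥ x ≤ c) : M ≤ c • 1 := by
  refine le_iff.mpr (.of_dotProduct_mulVec_nonneg ?_ fun y => ?_)
  · simpa [IsHermitian, conjTranspose_sub] using hM.eq
  · simpa [sub_mulVec, dotProduct_sub, smul_mulVec] using rayleigh_le_of_forall_unit h y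

lemma le_lamMax_smul_one (hM : M.IsHermitian) : M ≤ lamMax M • 1 :=
  le_smul_one_of_forall_rayleigh_le hM fun _ => rayleigh_le_lamMax M

lemma lamMin_smul_one_le (hM : M.IsHermitian) : lamMin M • 1 ≤ M := by
  have := le_smul_one_of_forall_rayleigh_le hM.neg (c := -lamMin M) fun x hx => by
    simpa [neg_mulVec] using lamMin_le_rayleigh M hx
  simpa using neg_le_neg this

lemma lamMin_pos (hM : M.PosDef) (hn : 0 < n) : 0 < lamMin M := by
  obtain ⟨r, hr, hmin⟩ := (isCompact_numericalRange M).exists_isLeast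
    ⟨_, Pi.single ⟨0, hn⟩ 1, by simp, rfl⟩
  change 0 < sInf (numericalRange M)
  rw [(show IsLeast _ r from ⟨hr, hmin⟩).csInf_eq]
  obtain ⟨x, hx, rfl⟩ := hr
  have hx0 : x ≠ 0 := by rintro rfl; simp at hx
  simpa using hM.dotProduct_mulVec_pos hx0

lemma lamMax_nonneg (hM : M.PosSemidef) : 0 ≤ lamMax M :=
  Real.sSup_nonneg fun _ ⟨x, _, hr⟩ => hr ▸ by simpa using hM.dotProduct_mulVec_nonneg x

lemma rayleigh_le_trace (hM : M.PosSemidef) {x : Fin n → ℝ} (hx : x ⬝ᵥ x = 1) :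
    x ⬝ᵥ M *ᵥ x ≤ trace M := by
  set T := CFC.sqrt M
  have hTT : T * T = M := CFC.sqrt_mul_sqrt_self M (nonneg_iff_posSemidef.mpr hM)
  have hTt : Tᵀ = T := transpose_eq_self_of_nonneg (CFC.sqrt_nonneg M)
  have hx' : ∑ j, x j ^ 2 = 1 := by simpa [dotProduct, sq] using hx
  calc x ⬝ᵥ M *ᵥ x = ∑ i, (∑ j, T i j * x j) ^ 2 := by
        rw [← hTT, ← mulVec_mulVec, dotProduct_mulVec, ← mulVec_transpose, hTt]
        simp [dotProduct, mulVec, sq]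
    _ ≤ ∑ i, (∑ j, T i j ^ 2) * ∑ j, x j ^ 2 :=
        Finset.sum_le_sum fun i _ => Finset.sum_mul_sq_le_sq_mul_sq _ _ _
    _ = trace (T * Tᵀ) := by
        simp only [hx', mul_one]
        simp [trace, mul_apply, sq]
    _ = trace M := by rw [hTt, hTT]

lemma lamMax_le_trace (hM : M.PosSemidef) : lamMax M ≤ trace M :=
  Real.sSup_le (fun _ ⟨_, hx, hr⟩ => hr ▸ rayleigh_le_trace hM hx) hM.trace_nonneg

lemma inv_add_le_lamMax_smul_one {d : ℕ} {S Q : Matrix (Fin d) (Fin d) ℝ} (hS : S.PosDef)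
    (hQ : Q.PosSemidef) : (S⁻¹ + Q)⁻¹ ≤ lamMax S • 1 :=
  (hS.inv_inv_add_le hQ).trans (le_lamMax_smul_one hS.isHermitian)

lemma frobNorm_inv_mul_inv_add_mul_le {d : ℕ} {S p P : Matrix (Fin d) (Fin d) ℝ} (hS : S.PosDef)
    (hp : p.PosSemidef) (hP : P.PosSemidef) :
    frobNorm (S⁻¹ * ((S⁻¹ + P)⁻¹ * ((p - P) * (S⁻¹ + p)⁻¹))) ≤
      frobNorm S⁻¹ * (lamMax S * (lamMax S * frobNorm (p - P))) := by
  have hc : 0 ≤ lamMax S := lamMax_nonneg hS.posSemidef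
  have hN : ∀ {Q : Matrix (Fin d) (Fin d) ℝ}, Q.PosSemidef → 0 ≤ (S⁻¹ + Q)⁻¹ := fun hQ =>
    nonneg_iff_posSemidef.mpr (hS.inv.add_posSemidef hQ).inv.posSemidef
  refine (frobNorm_mul_le _ _).trans (mul_le_mul_of_nonneg_left ?_ (frobNorm_nonneg _))
  refine (frobNorm_mul_le_of_le_smul_one' _ hc (hN hP)
    (inv_add_le_lamMax_smul_one hS hP)).trans (mul_le_mul_of_nonneg_left ?_ hc)
  exact frobNorm_mul_le_of_le_smul_one _ hc (hN hp) (inv_add_le_lamMax_smul_one hS hp)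

end Rayleigh

section Kalman

variable {m n : Type*} [Fintype m] [Fintype n] [DecidableEq m] [DecidableEq n]
  {B : Matrix m n ℝ} {R₀ : Matrix m m ℝ} {S p P Q : Matrix n n ℝ}

def kalmanGain (B : Matrix m n ℝ) (R₀ : Matrix m m ℝ) (Q : Matrix n n ℝ) : Matrix n m ℝ :=
  Q * Bᵀ * (B * Q * Bᵀ + R₀)⁻¹

lemma one_add_mul_eq_inv_add_mul (hS : IsUnit S.det) : 1 + Q * S = (S⁻¹ + Q) * S := by
  rw [Matrix.add_mul, nonsing_inv_mul _ hS]

lemma isUnit_one_add_mul (hS : S.PosDef) (hQ : Q.PosSemidef) : IsUnit (1 + Q * S) := by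
  rw [one_add_mul_eq_inv_add_mul ((isUnit_iff_isUnit_det _).mp hS.isUnit)]
  exact (hS.inv.add_posSemidef hQ).isUnit.mul hS.isUnit

lemma kalmanGain_mul_eq_one_sub_inv (hR₀ : R₀.PosDef) (hSdef : S = Bᵀ * R₀⁻¹ * B)
    (hS : S.PosDef) (hQ : Q.PosSemidef) : kalmanGain B R₀ Q * B = 1 - (1 + Q * S)⁻¹ := by
  have hHu : IsUnit (B * Q * Bᵀ + R₀).det := (isUnit_iff_isUnit_det _).mp <| by
    simpa using (hR₀.posSemidef_add (hQ.mul_mul_conjTranspose_same B)).isUnit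
  have hU := (isUnit_iff_isUnit_det _).mp (isUnit_one_add_mul hS hQ)
  have hB : B * (1 + Q * S) = (B * Q * Bᵀ + R₀) * (R₀⁻¹ * B) := by
    rw [hSdef, Matrix.mul_add, Matrix.add_mul, Matrix.mul_one,
      mul_nonsing_inv_cancel_left _ _ ((isUnit_iff_isUnit_det _).mp hR₀.isUnit)]
    simp only [Matrix.mul_assoc, add_comm]
  calc kalmanGain B R₀ Q * B
      = Q * Bᵀ * (B * Q * Bᵀ + R₀)⁻¹ * (B * (1 + Q * S)) * (1 + Q * S)⁻¹ := by
        rw [kalmanGain, ← Matrix.mul_assoc, mul_nonsing_inv_cancel_right _ _ hU]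
    _ = ((1 + Q * S) - 1) * (1 + Q * S)⁻¹ := by
        rw [hB, Matrix.mul_assoc (Q * Bᵀ), nonsing_inv_mul_cancel_left _ _ hHu,
          add_sub_cancel_left, hSdef]
        simp only [Matrix.mul_assoc]
    _ = 1 - (1 + Q * S)⁻¹ := by rw [Matrix.sub_mul, mul_nonsing_inv _ hU, Matrix.one_mul]

lemma kalmanGain_sub_kalmanGain_mul (hR₀ : R₀.PosDef) (hSdef : S = Bᵀ * R₀⁻¹ * B)
    (hS : S.PosDef) (hp : p.PosSemidef) (hP : P.PosSemidef) :
    (kalmanGain B R₀ p - kalmanGain B R₀ P) * B =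
      (1 + P * S)⁻¹ * (p - P) * S * (1 + p * S)⁻¹ := by
  rw [Matrix.sub_mul, kalmanGain_mul_eq_one_sub_inv hR₀ hSdef hS hp,
    kalmanGain_mul_eq_one_sub_inv hR₀ hSdef hS hP, sub_sub_sub_cancel_left,
    Matrix.inv_sub_inv (iff_of_true (isUnit_one_add_mul hS hP) (isUnit_one_add_mul hS hp)),
    add_sub_add_left_eq_sub, ← Matrix.sub_mul, Matrix.mul_assoc _ (p - P)]

lemma kalmanGain_sub_kalmanGain_mul_eq_inv_mul (hR₀ : R₀.PosDef) (hSdef : S = Bᵀ * R₀⁻¹ * B)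
    (hS : S.PosDef) (hp : p.PosSemidef) (hP : P.PosSemidef) :
    (kalmanGain B R₀ p - kalmanGain B R₀ P) * B =
      S⁻¹ * ((S⁻¹ + P)⁻¹ * ((p - P) * (S⁻¹ + p)⁻¹)) := by
  have hSu := (isUnit_iff_isUnit_det _).mp hS.isUnit
  rw [kalmanGain_sub_kalmanGain_mul hR₀ hSdef hS hp hP, one_add_mul_eq_inv_add_mul hSu,
    one_add_mul_eq_inv_add_mul hSu, Matrix.mul_inv_rev, Matrix.mul_inv_rev]
  simp only [Matrix.mul_assoc, mul_nonsing_inv_cancel_left _ _ hSu]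

end Kalman

theorem statement12_general {d d₀ : ℕ} (hd₀ : 1 ≤ d₀)
    (B : Matrix (Fin d₀) (Fin d) ℝ)
    (R₀ : Matrix (Fin d₀) (Fin d₀) ℝ) (hR₀ : R₀.PosDef)
    (S : Matrix (Fin d) (Fin d) ℝ) (hSdef : S = Bᵀ * R₀⁻¹ * B)
    (hS : S.PosDef) (hBBt : (B * Bᵀ).PosDef)
    (K : Matrix (Fin d) (Fin d) ℝ → Matrix (Fin d) (Fin d₀) ℝ)
    (hK : ∀ Q, K Q = Q * Bᵀ * (B * Q * Bᵀ + R₀)⁻¹)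
    (p P : Matrix (Fin d) (Fin d) ℝ) (hp : p.PosSemidef) (hP : P.PosSemidef) :
    (K p - K P) * B = (1 + P * S)⁻¹ * (p - P) * S * (1 + p * S)⁻¹ ∧
    frobNorm (K p - K P) ≤
      (Real.sqrt (lamMin (B * Bᵀ)))⁻¹ * lamMax S * Matrix.trace S *
        frobNorm S⁻¹ * frobNorm (p - P) := by
  obtain rfl : K = kalmanGain B R₀ := funext hK
  refine ⟨kalmanGain_sub_kalmanGain_mul hR₀ hSdef hS hp hP, ?_⟩
  have := frobNorm_nonneg S⁻¹
  have := frobNorm_nonneg (p - P)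
  have := lamMax_nonneg hS.posSemidef
  calc frobNorm (kalmanGain B R₀ p - kalmanGain B R₀ P)
      ≤ (Real.sqrt (lamMin (B * Bᵀ)))⁻¹ *
          frobNorm ((kalmanGain B R₀ p - kalmanGain B R₀ P) * B) :=
        frobNorm_le_of_smul_one_le_mul_transpose _ (lamMin_pos hBBt hd₀)
          (lamMin_smul_one_le hBBt.isHermitian)
    _ ≤ (Real.sqrt (lamMin (B * Bᵀ)))⁻¹ *
          (frobNorm S⁻¹ * (lamMax S * (lamMax S * frobNorm (p - P)))) := by
        rw [kalmanGain_sub_kalmanGain_mul_eq_inv_mul hR₀ hSdef hS hp hP]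
        gcongr
        exact frobNorm_inv_mul_inv_add_mul_le hS hp hP
    _ = (Real.sqrt (lamMin (B * Bᵀ)))⁻¹ * lamMax S * lamMax S *
          frobNorm S⁻¹ * frobNorm (p - P) := by ring
    _ ≤ _ := by
        gcongr
        exact lamMax_le_trace hS.posSemidef

/-- Assume `S := Bᵀ R₀⁻¹ B` and `B Bᵀ` are positive definite.  Then
for all positive semidefinite `p, P`:
`(K(p) − K(P)) B = (I + P S)⁻¹ (p − P) S (I + p S)⁻¹` and
`‖K(p) − K(P)‖_F ≤ λ_min(B Bᵀ)^{−1/2} λ_max(S) Tr(S) ‖S⁻¹‖_F ‖p − P‖_F`,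
where `K(P) := P Bᵀ (B P Bᵀ + R₀)⁻¹`. -/
theorem statement12 {d d₀ : ℕ} (hd : 1 ≤ d) (hd₀ : 1 ≤ d₀)
    (A : Matrix (Fin d) (Fin d) ℝ) (B : Matrix (Fin d₀) (Fin d) ℝ)
    (R₀ : Matrix (Fin d₀) (Fin d₀) ℝ) (hR₀ : R₀.PosDef)
    (S : Matrix (Fin d) (Fin d) ℝ) (hSdef : S = Bᵀ * R₀⁻¹ * B)
    (hS : S.PosDef) (hBBt : (B * Bᵀ).PosDef)
    (K : Matrix (Fin d) (Fin d) ℝ → Matrix (Fin d) (Fin d₀) ℝ)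
    (hK : ∀ Q, K Q = Q * Bᵀ * (B * Q * Bᵀ + R₀)⁻¹)
    (p P : Matrix (Fin d) (Fin d) ℝ) (hp : p.PosSemidef) (hP : P.PosSemidef) :
    (K p - K P) * B = (1 + P * S)⁻¹ * (p - P) * S * (1 + p * S)⁻¹ ∧
    frobNorm (K p - K P) ≤
      (Real.sqrt (lamMin (B * Bᵀ)))⁻¹ * lamMax S * Matrix.trace S *
        frobNorm S⁻¹ * frobNorm (p - P) :=
  statement12_general hd₀ B R₀ hR₀ S hSdef hS hBBt K hK p P hp hP
end
end
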